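/- Let θ ∈ (0,1) and let f : 𝔻 → X₀ + X₁ be continuous on the closed unit disk, analytic in its interior, with f(1) = f(e^{i2πθ}) = 0, such that f restricted to the closed arc Γ̄₀ = {e^{it} : 2πθ ≤ t ≤ 2π} is X₀-valued continuous and f restricted to Γ̄₁ = {e^{it} : 0 ≤ t ≤ 2πθ} is X₁-valued continuous. Then ‖f(0)‖_{[X₀,X₁]_θ} ≤ (1/2π)(∫_{2πθ}^{2π} ‖f(e^{it})‖_{X₀} dt + ∫₀^{2πθ} ‖f(e^{it})‖_{X₁} dt). -/

import Mathlib

open Complex Set MeasureTheory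
open scoped Real

variable {X0 X1 E : Type*}
  [NormedAddCommGroup X0] [NormedSpace ℂ X0]
  [NormedAddCommGroup X1] [NormedSpace ℂ X1]
  [NormedAddCommGroup E] [NormedSpace ℂ E]

/-- The disk version `F_𝔻(X₀, X₁)` of Calderón's function space (for the parameter `θ`):
`f : 𝔻 → X₀ + X₁` continuous on the closed disk, analytic in its interior, vanishing at
`1` and `e^{2πθi}`, whose restriction to the closed arc `Γ̄ⱼ` is a continuous `Xⱼ`-valued
function (`Γ̄₀` parametrized by `t ∈ [2πθ, 2π]`, `Γ̄₁` by `t ∈ [0, 2πθ]`).  The Banach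
couple `(X₀, X₁)` is given by continuous injections `i0, i1` into the space `E` playing
the role of `X₀ + X₁`. -/
structure CalderonDiskFun (θ : ℝ) (i0 : X0 →L[ℂ] E) (i1 : X1 →L[ℂ] E) where
  toFun : ℂ → E
  g0 : ℝ → X0
  g1 : ℝ → X1
  cont : ContinuousOn toFun (Metric.closedBall (0:ℂ) 1)
  anal : DifferentiableOn ℂ toFun (Metric.ball (0:ℂ) 1)
  vanish_one : toFun 1 = 0
  vanish_theta : toFun (Complex.exp ((2 * π * θ : ℝ) * I)) = 0
  cont_g0 : ContinuousOn g0 (Icc (2 * π * θ) (2 * π))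
  cont_g1 : ContinuousOn g1 (Icc 0 (2 * π * θ))
  eq_g0 : ∀ t ∈ Icc (2 * π * θ) (2 * π), i0 (g0 t) = toFun (Complex.exp ((t:ℝ) * I))
  eq_g1 : ∀ t ∈ Icc (0:ℝ) (2 * π * θ), i1 (g1 t) = toFun (Complex.exp ((t:ℝ) * I))

/-- The norm `‖f‖_{F_𝔻} = max (sup_{Γ₀} ‖f‖_{X₀}, sup_{Γ₁} ‖f‖_{X₁})`. -/
noncomputable def CalderonDiskFun.norm {θ : ℝ} {i0 : X0 →L[ℂ] E} {i1 : X1 →L[ℂ] E}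
    (f : CalderonDiskFun θ i0 i1) : ℝ :=
  max (sSup ((fun t => ‖f.g0 t‖) '' Icc (2 * π * θ) (2 * π)))
    (sSup ((fun t => ‖f.g1 t‖) '' Icc 0 (2 * π * θ)))

/-- The norm of the complex interpolation space `[X₀, X₁]_θ` (in its disk description):
`‖x‖_θ = inf {‖f‖_{F_𝔻} : f ∈ F_𝔻(X₀,X₁), f(0) = x}`. -/
noncomputable def interpNorm (θ : ℝ) (i0 : X0 →L[ℂ] E) (i1 : X1 →L[ℂ] E) (x : E) : ℝ :=
  sInf {r | ∃ f : CalderonDiskFun θ i0 i1, f.toFun 0 = x ∧ r = f.norm}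

/-!
Glue the boundary norms of `f` into one continuous function `h` on the unit circle; the vanishing
of `f` at `1` and `e^{2πiθ}` makes the two arcs fit together. Given `ρ, ε > 0`, approximate
`log (h + ρ)` uniformly within `ε` by `Re Q` on the circle for a polynomial `Q` (density of
trigonometric polynomials, with `Re (c e^{-int}) = Re (c̄ e^{int})`). Then `φ = exp (Q 0 - Q)` is
entire with `φ 0 = 1`, so `φ • f` is another representative of `f 0`, and on the circle
`|φ| (h + ρ) = exp (Re Q 0 - Re Q + log (h + ρ)) ≤ exp (mean log (h + ρ) + 2ε)` by the mean value
property of `Re Q`. By Jensen's inequality the right side is at most `exp (2ε)` times the mean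
of `h + ρ`.
-/

open scoped ComplexConjugate Interval

theorem fourier_two_pi_coe_apply (n : ℤ) (t : ℝ) :
    fourier n (t : AddCircle (2 * π)) = cexp (n * t * I) := by
  rw [fourier_coe_apply]
  congr 1
  field_simp
  push_cast
  ring

theorem exists_differentiable_add_conj_of_mem_span_fourier {q : C(AddCircle (2 * π), ℂ)}
    (hq : q ∈ Submodule.span ℂ (range (fourier (T := 2 * π)))) :
    ∃ F G : ℂ → ℂ, Differentiable ℂ F ∧ Differentiable ℂ G ∧
      ∀ t : ℝ, q t = F (cexp (t * I)) + conj (G (cexp (t * I))) := by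
  induction hq using Submodule.span_induction with
  | mem _ hq =>
    obtain ⟨n, rfl⟩ := hq
    obtain ⟨k, rfl | rfl⟩ := Int.eq_nat_or_neg n
    · refine ⟨(· ^ k), 0, differentiable_pow k, differentiable_const 0, fun t => ?_⟩
      rw [fourier_two_pi_coe_apply, Int.cast_natCast, mul_assoc, exp_nat_mul]
      simp
    · refine ⟨0, (· ^ k), differentiable_const 0, differentiable_pow k, fun t => ?_⟩
      rw [fourier_two_pi_coe_apply, map_pow, ← exp_conj, ← exp_nat_mul]
      simp only [Int.cast_neg, Int.cast_natCast, neg_mul, Pi.zero_apply, map_mul, conj_ofReal,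
        conj_I, mul_neg, zero_add]
      ring_nf
  | zero => exact ⟨0, 0, differentiable_const 0, differentiable_const 0, fun t => by simp⟩
  | add q r _ _ hq hr =>
    obtain ⟨F, G, hF, hG, hqFG⟩ := hq
    obtain ⟨F', G', hF', hG', hrFG⟩ := hr
    refine ⟨F + F', G + G', hF.add hF', hG.add hG', fun t => ?_⟩
    simp only [ContinuousMap.add_apply, hqFG, hrFG, Pi.add_apply, map_add]
    ring
  | smul c q _ hq =>
    obtain ⟨F, G, hF, hG, hqFG⟩ := hq
    refine ⟨c • F, conj c • G, hF.const_smul c, hG.const_smul (conj c), fun t => ?_⟩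
    simp only [ContinuousMap.smul_apply, hqFG, Pi.smul_apply, smul_eq_mul, map_mul,
      conj_conj]
    ring

theorem Differentiable.re_apply_zero_eq_intervalAverage {Q : ℂ → ℂ} (hQ : Differentiable ℂ Q) :
    (Q 0).re = ⨍ t in 0..2 * π, (Q (cexp (t * I))).re := by
  have hre := reCLM.circleAverage_comp_comm
    (hQ.continuous.continuousOn.circleIntegrable' (c := 0) (R := 1))
  rw [(hQ.diffContOnCl (s := Metric.ball 0 |1|)).circleAverage] at hre
  rw [← reCLM_apply, ← hre, Real.circleAverage_eq_intervalAverage]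
  simp [circleMap_zero]

theorem exp_intervalAverage_le {u : ℝ → ℝ} {a b : ℝ} (hab : a < b)
    (hu : ContinuousOn u (Icc a b)) :
    Real.exp (⨍ t in a..b, u t) ≤ ⨍ t in a..b, Real.exp (u t) := by
  have hΙ : Ι a b ⊆ Icc a b := by rw [uIoc_of_le hab.le]; exact Ioc_subset_Icc_self
  refine convexOn_exp.map_set_average_le Real.continuous_exp.continuousOn isClosed_univ
    ?_ ?_ (by simp) ?_ ?_
  · simp [uIoc_of_le hab.le, hab]
  · simp [uIoc_of_le hab.le]
  · exact (hu.integrableOn_Icc).mono_set hΙ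
  · exact ((Real.continuous_exp.comp_continuousOn hu).integrableOn_Icc).mono_set hΙ

theorem intervalAverage_le_intervalAverage_add {f g : ℝ → ℝ} {a b c : ℝ} (hab : a < b)
    (hf : ContinuousOn f (Icc a b)) (hg : ContinuousOn g (Icc a b))
    (hfg : ∀ t ∈ Icc a b, f t ≤ g t + c) :
    ⨍ t in a..b, f t ≤ (⨍ t in a..b, g t) + c := by
  have hint := intervalIntegral.integral_mono_on hab.le (hf.intervalIntegrable_of_Icc hab.le)
    ((hg.intervalIntegrable_of_Icc hab.le).add (intervalIntegrable_const (μ := volume))) hfg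
  rw [intervalIntegral.integral_add (hg.intervalIntegrable_of_Icc hab.le)
    intervalIntegrable_const, intervalIntegral.integral_const, smul_eq_mul] at hint
  have hba : 0 < b - a := sub_pos.2 hab
  simp only [interval_average_eq, smul_eq_mul]
  calc (b - a)⁻¹ * ∫ t in a..b, f t ≤ (b - a)⁻¹ * ((∫ t in a..b, g t) + (b - a) * c) := by
        gcongr
    _ = (b - a)⁻¹ * (∫ t in a..b, g t) + c := by field_simp

theorem exists_differentiable_abs_re_sub_lt {u : ℝ → ℝ} (hu : ContinuousOn u (Icc 0 (2 * π)))
    (hu_per : u 0 = u (2 * π)) {ε : ℝ} (hε : 0 < ε) :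
    ∃ Q : ℂ → ℂ, Differentiable ℂ Q ∧
      ∀ t ∈ Icc 0 (2 * π), |(Q (cexp (t * I))).re - u t| < ε := by
  have : Fact (0 < 2 * π) := ⟨Real.two_pi_pos⟩
  let U : C(AddCircle (2 * π), ℂ) :=
    ⟨AddCircle.liftIco (2 * π) 0 (fun t => (u t : ℂ)), AddCircle.liftIco_zero_continuous
      (congrArg ofReal hu_per) (continuous_ofReal.comp_continuousOn hu)⟩
  have hU : U ∈ (Submodule.span ℂ (range (fourier (T := 2 * π)))).topologicalClosure := by
    rw [span_fourier_closure_eq_top]; trivial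
  obtain ⟨q, hq, hUq⟩ := Metric.mem_closure_iff.mp hU ε hε
  obtain ⟨F, G, hF, hG, hqFG⟩ := exists_differentiable_add_conj_of_mem_span_fourier hq
  have hIco : ∀ t ∈ Ico 0 (2 * π), |((F + G) (cexp (t * I))).re - u t| < ε := by
    intro t ht
    have hUt : U t = u t := AddCircle.liftIco_zero_coe_apply (f := fun t => (u t : ℂ)) ht
    calc |((F + G) (cexp (t * I))).re - u t| = |(q t - U t).re| := by
          simp [hqFG, hUt]
      _ ≤ dist (q t) (U t) := (abs_re_le_norm _).trans_eq (dist_eq_norm _ _).symm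
      _ ≤ dist q U := ContinuousMap.dist_apply_le_dist _
      _ < ε := by rwa [dist_comm]
  refine ⟨F + G, hF.add hG, fun t ht => ?_⟩
  rcases ht.2.lt_or_eq with ht' | rfl
  · exact hIco t ⟨ht.1, ht'⟩
  · have hexp : cexp ((2 * π : ℝ) * I) = cexp ((0 : ℝ) * I) := by
      simp [exp_two_pi_mul_I]
    rw [hexp, ← hu_per]
    exact hIco 0 ⟨le_rfl, Real.two_pi_pos⟩

theorem exists_differentiable_apply_zero_eq_one_norm_mul_le {w : ℝ → ℝ}
    (hw : ContinuousOn w (Icc 0 (2 * π))) (hw_pos : ∀ t ∈ Icc 0 (2 * π), 0 < w t)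
    (hw_per : w 0 = w (2 * π)) {C : ℝ} (hC : ⨍ t in 0..2 * π, w t < C) :
    ∃ φ : ℂ → ℂ, Differentiable ℂ φ ∧ φ 0 = 1 ∧
      ∀ t ∈ Icc 0 (2 * π), ‖φ (cexp (t * I))‖ * w t ≤ C := by
  set u : ℝ → ℝ := fun t => Real.log (w t)
  have hu : ContinuousOn u (Icc 0 (2 * π)) := hw.log fun t ht => (hw_pos t ht).ne'
  set m := ⨍ t in 0..2 * π, u t
  have hexp_m : Real.exp m < C := by
    refine lt_of_le_of_lt ?_ hC
    calc Real.exp m ≤ ⨍ t in 0..2 * π, Real.exp (u t) := exp_intervalAverage_le Real.two_pi_pos hu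
      _ = ⨍ t in 0..2 * π, w t := by
        refine setAverage_congr_fun measurableSet_uIoc (ae_of_all _ fun t ht => ?_)
        rw [uIoc_of_le Real.two_pi_pos.le] at ht
        exact Real.exp_log (hw_pos t (Ioc_subset_Icc_self ht))
  have hC_pos : 0 < C := (Real.exp_pos m).trans hexp_m
  have hm : m < Real.log C := (Real.lt_log_iff_exp_lt hC_pos).2 hexp_m
  -- Half of the gap `log C - m` absorbs the error in the mean of `Re Q`, half the pointwise error.
  obtain ⟨Q, hQ, hQu⟩ := exists_differentiable_abs_re_sub_lt hu (by simp only [u, hw_per])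
    (half_pos (sub_pos.2 hm))
  have hQ0 : (Q 0).re ≤ m + (Real.log C - m) / 2 := by
    rw [hQ.re_apply_zero_eq_intervalAverage]
    refine intervalAverage_le_intervalAverage_add Real.two_pi_pos ?_ hu
      fun t ht => by linarith [(abs_sub_lt_iff.1 (hQu t ht)).1]
    exact (continuous_re.comp (hQ.continuous.comp (by fun_prop))).continuousOn
  refine ⟨fun z => cexp (Q 0 - Q z), by fun_prop, by simp, fun t ht => ?_⟩
  have hQt := (abs_sub_lt_iff.1 (hQu t ht)).2
  calc ‖cexp (Q 0 - Q (cexp (t * I)))‖ * w t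
      = Real.exp ((Q 0).re - (Q (cexp (t * I))).re + u t) := by
        rw [norm_exp, sub_re, Real.exp_add, Real.exp_log (hw_pos t ht)]
    _ ≤ Real.exp (Real.log C) := by gcongr; linarith
    _ = C := Real.exp_log hC_pos

theorem two_pi_mul_mem_Icc {θ : ℝ} (hθ : θ ∈ Icc (0 : ℝ) 1) : 2 * π * θ ∈ Icc 0 (2 * π) :=
  ⟨by have := hθ.1; positivity, mul_le_of_le_one_right Real.two_pi_pos.le hθ.2⟩

namespace CalderonDiskFun

variable {θ : ℝ} {i0 : X0 →L[ℂ] E} {i1 : X1 →L[ℂ] E}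

noncomputable def smul (φ : ℂ → ℂ) (hφ : DiffContOnCl ℂ φ (Metric.ball 0 1))
    (f : CalderonDiskFun θ i0 i1) : CalderonDiskFun θ i0 i1 where
  toFun z := φ z • f.toFun z
  g0 t := φ (cexp (t * I)) • f.g0 t
  g1 t := φ (cexp (t * I)) • f.g1 t
  cont := hφ.continuousOn_ball.smul f.cont
  anal := hφ.differentiableOn.smul f.anal
  vanish_one := by simp only [f.vanish_one, smul_zero]
  vanish_theta := by simp only [f.vanish_theta, smul_zero]
  cont_g0 := (hφ.continuousOn_ball.comp_continuous (by fun_prop)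
    fun t => by simp [norm_exp_ofReal_mul_I]).continuousOn.smul f.cont_g0
  cont_g1 := (hφ.continuousOn_ball.comp_continuous (by fun_prop)
    fun t => by simp [norm_exp_ofReal_mul_I]).continuousOn.smul f.cont_g1
  eq_g0 t ht := by simp only [map_smul, f.eq_g0 t ht]
  eq_g1 t ht := by simp only [map_smul, f.eq_g1 t ht]

variable (f : CalderonDiskFun θ i0 i1)

theorem norm_nonneg : 0 ≤ f.norm :=
  le_max_of_le_left <| Real.sSup_nonneg <| by rintro _ ⟨t, -, rfl⟩; exact _root_.norm_nonneg _

theorem norm_le {B : ℝ} (hB : 0 ≤ B) (h0 : ∀ t ∈ Icc (2 * π * θ) (2 * π), ‖f.g0 t‖ ≤ B)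
    (h1 : ∀ t ∈ Icc 0 (2 * π * θ), ‖f.g1 t‖ ≤ B) : f.norm ≤ B :=
  max_le (Real.sSup_le (by rintro _ ⟨t, ht, rfl⟩; exact h0 t ht) hB)
    (Real.sSup_le (by rintro _ ⟨t, ht, rfl⟩; exact h1 t ht) hB)

theorem g0_eq_zero (hi0 : Function.Injective i0) {t : ℝ} (ht : t ∈ Icc (2 * π * θ) (2 * π))
    (hf : f.toFun (cexp (t * I)) = 0) : f.g0 t = 0 :=
  hi0 (by rw [f.eq_g0 t ht, hf, map_zero])

theorem g1_eq_zero (hi1 : Function.Injective i1) {t : ℝ} (ht : t ∈ Icc 0 (2 * π * θ))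
    (hf : f.toFun (cexp (t * I)) = 0) : f.g1 t = 0 :=
  hi1 (by rw [f.eq_g1 t ht, hf, map_zero])

/-- On `[0, 2πθ]` this is `‖g1 t‖` and on `[2πθ, 2π]` it is `‖g0 t‖`: the other summand is the
norm of the value at `e^{2πiθ}`, which vanishes. The `min`/`max` form makes it visibly continuous. -/
noncomputable def boundaryNorm (t : ℝ) : ℝ :=
  ‖f.g1 (min t (2 * π * θ))‖ + ‖f.g0 (max t (2 * π * θ))‖

theorem boundaryNorm_nonneg (t : ℝ) : 0 ≤ f.boundaryNorm t :=
  add_nonneg (_root_.norm_nonneg _) (_root_.norm_nonneg _)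

theorem continuousOn_boundaryNorm (hθ : θ ∈ Icc (0 : ℝ) 1) :
    ContinuousOn f.boundaryNorm (Icc 0 (2 * π)) := by
  obtain ⟨h0, h1⟩ := two_pi_mul_mem_Icc hθ
  refine ContinuousOn.add ?_ ?_
  · exact (f.cont_g1.comp (continuous_id.min continuous_const).continuousOn
      fun t ht => ⟨le_min ht.1 h0, min_le_right _ _⟩).norm
  · exact (f.cont_g0.comp (continuous_id.max continuous_const).continuousOn
      fun t ht => ⟨le_max_right _ _, max_le ht.2 h1⟩).norm

theorem boundaryNorm_eq_norm_g1 (hi0 : Function.Injective i0) (hθ : θ ≤ 1) {t : ℝ}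
    (ht : t ∈ Icc 0 (2 * π * θ)) : f.boundaryNorm t = ‖f.g1 t‖ := by
  have hθ_mem : 2 * π * θ ∈ Icc (2 * π * θ) (2 * π) :=
    ⟨le_rfl, mul_le_of_le_one_right Real.two_pi_pos.le hθ⟩
  rw [boundaryNorm, min_eq_left ht.2, max_eq_right ht.2, f.g0_eq_zero hi0 hθ_mem f.vanish_theta,
    _root_.norm_zero, add_zero]

theorem boundaryNorm_eq_norm_g0 (hi1 : Function.Injective i1) (hθ : 0 ≤ θ) {t : ℝ}
    (ht : t ∈ Icc (2 * π * θ) (2 * π)) : f.boundaryNorm t = ‖f.g0 t‖ := by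
  have hθ_mem : 2 * π * θ ∈ Icc 0 (2 * π * θ) := ⟨by positivity, le_rfl⟩
  rw [boundaryNorm, min_eq_right ht.1, max_eq_left ht.1, f.g1_eq_zero hi1 hθ_mem f.vanish_theta,
    _root_.norm_zero, zero_add]

theorem integral_boundaryNorm (hi0 : Function.Injective i0) (hi1 : Function.Injective i1)
    (hθ : θ ∈ Icc (0 : ℝ) 1) :
    ∫ t in 0..2 * π, f.boundaryNorm t =
      (∫ t in (2 * π * θ)..(2 * π), ‖f.g0 t‖) + ∫ t in (0:ℝ)..(2 * π * θ), ‖f.g1 t‖ := by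
  obtain ⟨h0, h1⟩ := two_pi_mul_mem_Icc hθ
  have hint : ∀ a ∈ Icc 0 (2 * π), ∀ b ∈ Icc 0 (2 * π),
      IntervalIntegrable f.boundaryNorm volume a b := fun a ha b hb =>
    ((f.continuousOn_boundaryNorm hθ).mono (uIcc_subset_Icc ha hb)).intervalIntegrable
  rw [← intervalIntegral.integral_add_adjacent_intervals
      (hint 0 ⟨le_rfl, Real.two_pi_pos.le⟩ _ ⟨h0, h1⟩)
      (hint _ ⟨h0, h1⟩ _ ⟨Real.two_pi_pos.le, le_rfl⟩),
    intervalIntegral.integral_congr (g := fun t => ‖f.g1 t‖) fun t ht =>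
      f.boundaryNorm_eq_norm_g1 hi0 hθ.2 (by rwa [uIcc_of_le h0] at ht),
    intervalIntegral.integral_congr (g := fun t => ‖f.g0 t‖) fun t ht =>
      f.boundaryNorm_eq_norm_g0 hi1 hθ.1 (by rwa [uIcc_of_le h1] at ht),
    add_comm]

theorem boundaryNorm_zero_eq_two_pi (hi0 : Function.Injective i0) (hi1 : Function.Injective i1)
    (hθ : θ ∈ Icc (0 : ℝ) 1) : f.boundaryNorm 0 = f.boundaryNorm (2 * π) := by
  obtain ⟨h0, h1⟩ := two_pi_mul_mem_Icc hθ
  rw [f.boundaryNorm_eq_norm_g1 hi0 hθ.2 ⟨le_rfl, h0⟩,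
    f.boundaryNorm_eq_norm_g0 hi1 hθ.1 ⟨h1, le_rfl⟩,
    f.g1_eq_zero hi1 ⟨le_rfl, h0⟩ (by simpa using f.vanish_one),
    f.g0_eq_zero hi0 ⟨h1, le_rfl⟩ (by simpa [exp_two_pi_mul_I] using f.vanish_one),
    _root_.norm_zero, _root_.norm_zero]

theorem norm_smul_le (hi0 : Function.Injective i0) (hi1 : Function.Injective i1)
    (hθ : θ ∈ Icc (0 : ℝ) 1) {φ : ℂ → ℂ} (hφ : DiffContOnCl ℂ φ (Metric.ball 0 1)) {C : ℝ}
    (hφf : ∀ t ∈ Icc 0 (2 * π), ‖φ (cexp (t * I))‖ * f.boundaryNorm t ≤ C) :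
    (f.smul φ hφ).norm ≤ C := by
  obtain ⟨h0, h1⟩ := two_pi_mul_mem_Icc hθ
  have hC : 0 ≤ C := (mul_nonneg (_root_.norm_nonneg _) (f.boundaryNorm_nonneg 0)).trans
    (hφf 0 ⟨le_rfl, Real.two_pi_pos.le⟩)
  refine norm_le _ hC (fun t ht => ?_) (fun t ht => ?_)
  · rw [smul, norm_smul, ← f.boundaryNorm_eq_norm_g0 hi1 hθ.1 ht]
    exact hφf t ⟨h0.trans ht.1, ht.2⟩
  · rw [smul, norm_smul, ← f.boundaryNorm_eq_norm_g1 hi0 hθ.2 ht]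
    exact hφf t ⟨ht.1, ht.2.trans h1⟩

theorem interpNorm_le_norm : interpNorm θ i0 i1 (f.toFun 0) ≤ f.norm :=
  csInf_le ⟨0, by rintro _ ⟨g, -, rfl⟩; exact g.norm_nonneg⟩ ⟨f, rfl, rfl⟩

theorem interpNorm_le_of_intervalAverage_boundaryNorm_lt (hi0 : Function.Injective i0)
    (hi1 : Function.Injective i1) (hθ : θ ∈ Icc (0 : ℝ) 1) {C : ℝ}
    (hC : ⨍ t in 0..2 * π, f.boundaryNorm t < C) : interpNorm θ i0 i1 (f.toFun 0) ≤ C := by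
  have hh := f.continuousOn_boundaryNorm hθ
  -- `ρ` keeps `log (boundaryNorm + ρ)` finite where `f` vanishes on the circle.
  set ρ := (C - ⨍ t in 0..2 * π, f.boundaryNorm t) / 2
  have hρ : 0 < ρ := half_pos (sub_pos.2 hC)
  obtain ⟨φ, hφ, hφ0, hφC⟩ := exists_differentiable_apply_zero_eq_one_norm_mul_le
    (w := fun t => f.boundaryNorm t + ρ) (C := C) (hh.add continuousOn_const)
    (fun t _ => add_pos_of_nonneg_of_pos (f.boundaryNorm_nonneg t) hρ)
    (by rw [f.boundaryNorm_zero_eq_two_pi hi0 hi1 hθ])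
    ((intervalAverage_le_intervalAverage_add Real.two_pi_pos (hh.add continuousOn_const) hh
      fun t _ => le_rfl).trans_lt (by linarith))
  calc interpNorm θ i0 i1 (f.toFun 0)
      = interpNorm θ i0 i1 ((f.smul φ hφ.diffContOnCl).toFun 0) := by simp [smul, hφ0]
    _ ≤ (f.smul φ hφ.diffContOnCl).norm := interpNorm_le_norm _
    _ ≤ C := f.norm_smul_le hi0 hi1 hθ _ fun t ht =>
      (mul_le_mul_of_nonneg_left (by linarith) (_root_.norm_nonneg _)).trans (hφC t ht)

end CalderonDiskFun

theorem calderon_disk_lemma_general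
    (θ : ℝ) (hθ : θ ∈ Ioo (0:ℝ) 1)
    (i0 : X0 →L[ℂ] E) (i1 : X1 →L[ℂ] E)
    (hi0 : Function.Injective i0) (hi1 : Function.Injective i1)
    (f : CalderonDiskFun θ i0 i1) :
    interpNorm θ i0 i1 (f.toFun 0) ≤
      (1 / (2 * π)) * ((∫ t in (2 * π * θ)..(2 * π), ‖f.g0 t‖) +
        ∫ t in (0:ℝ)..(2 * π * θ), ‖f.g1 t‖) := by
  have hθ' : θ ∈ Icc (0 : ℝ) 1 := Ioo_subset_Icc_self hθ
  have hmean : ⨍ t in 0..2 * π, f.boundaryNorm t = (1 / (2 * π)) *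
      ((∫ t in (2 * π * θ)..(2 * π), ‖f.g0 t‖) + ∫ t in (0:ℝ)..(2 * π * θ), ‖f.g1 t‖) := by
    rw [interval_average_eq, f.integral_boundaryNorm hi0 hi1 hθ', sub_zero, smul_eq_mul, one_div]
  rw [← hmean]
  exact le_of_forall_gt_imp_ge_of_dense fun C hC =>
    f.interpNorm_le_of_intervalAverage_boundaryNorm_lt hi0 hi1 hθ' hC

/-- Lemma `gie`: for every `f ∈ F_𝔻(X₀, X₁)`,
`‖f(0)‖_{[X₀,X₁]_θ} ≤ (1/2π) (∫_{2πθ}^{2π} ‖f(e^{it})‖_{X₀} dt + ∫_0^{2πθ} ‖f(e^{it})‖_{X₁} dt)`. -/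
theorem calderon_disk_lemma
    [CompleteSpace X0] [CompleteSpace X1] [CompleteSpace E]
    (θ : ℝ) (hθ : θ ∈ Ioo (0:ℝ) 1)
    (i0 : X0 →L[ℂ] E) (i1 : X1 →L[ℂ] E)
    (hi0 : Function.Injective i0) (hi1 : Function.Injective i1)
    (hreg0 : Dense {x : X0 | ∃ y : X1, i0 x = i1 y})
    (hreg1 : Dense {y : X1 | ∃ x : X0, i0 x = i1 y})
    (f : CalderonDiskFun θ i0 i1) :
    interpNorm θ i0 i1 (f.toFun 0) ≤
      (1 / (2 * π)) * ((∫ t in (2 * π * θ)..(2 * π), ‖f.g0 t‖) +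
        ∫ t in (0:ℝ)..(2 * π * θ), ‖f.g1 t‖) :=
  calderon_disk_lemma_general θ hθ i0 i1 hi0 hi1 f
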